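/- arXiv:2306.10744 — 7 statements merged into one kernel-verified Lean document; each statement's English description precedes it below -/
import Mathlib

section
/- Let m ≥ 1, n = 2m+1, and d = 2·3^m + 1. Then gcd(d, 3^n - 1) = 1. -/
/-- Let m ≥ 1, n = 2m+1, d = 2·3^m + 1. Then gcd(d, 3^n - 1) = 1. -/
theorem stmt_1 (m : ℕ) (hm : 1 ≤ m) :
    Nat.gcd (2 * 3 ^ m + 1) (3 ^ (2 * m + 1) - 1) = 1 := by
  have hx : 1 ≤ 3 ^ m := Nat.one_le_pow _ _ (by norm_num)
  have h3 : (3:ℕ) ^ (2 * m + 1) = 3 * (3 ^ m * 3 ^ m) := by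
    rw [pow_succ, two_mul, pow_add]; ring
  have h1 : Nat.gcd (2 * 3 ^ m + 1) (3 ^ (2 * m + 1) - 1) ∣ 2 * 3 ^ m + 1 :=
    Nat.gcd_dvd_left _ _
  have h2 : Nat.gcd (2 * 3 ^ m + 1) (3 ^ (2 * m + 1) - 1) ∣ 3 ^ (2 * m + 1) - 1 :=
    Nat.gcd_dvd_right _ _
  have ha := h1.mul_left (3 * (2 * 3 ^ m - 1))
  have hb := h2.mul_left 4
  have key : 3 * (2 * 3 ^ m - 1) * (2 * 3 ^ m + 1) - 4 * (3 ^ (2 * m + 1) - 1) = 1 := by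
    rw [h3]
    obtain ⟨y, hy⟩ := Nat.exists_eq_add_of_le hx
    rw [hy]
    have e1 : 2 * (1 + y) - 1 = 2 * y + 1 := by omega
    have e2 : 3 * ((1 + y) * (1 + y)) = (3 * (y * y) + 6 * y + 2) + 1 := by ring
    rw [e1, e2, Nat.add_sub_cancel]
    have e3 : 3 * (2 * y + 1) * (2 * (1 + y) + 1) =
        4 * (3 * (y * y) + 6 * y + 2) + 1 := by ring
    rw [e3, Nat.add_sub_cancel_left]
  have hd := Nat.dvd_sub ha hb
  rw [key] at hd
  exact Nat.dvd_one.mp hd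
end

section
/- Let m ≥ 1, n = 2m+1, q = 3^n, and d = 2·3^m + 1 odd. If x₁, x₂ are nonzero squares in GF(q) satisfying c₁x₁ + c₂x₂ = 0 and c₁x₁^d + c₂x₂^d = 0 for some c₁, c₂ ∈ {1, -1} ⊆ GF(3), then x₁ = x₂. In particular, no 2-element subset {x₁, x₂} of the set of nonzero squares satisfies this system. -/
/-! Only the linear equation matters. Since `3 ^ (2m+1) ≡ 3 (mod 4)`, `-1` is not a square in
`GF(3^(2m+1))`, so the sum of two nonzero squares never vanishes. Hence `c₁ x₁ + c₂ x₂ = 0`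
forces `c₁ = -c₂`, that is, `x₁ = x₂`. -/

lemma GaloisField.not_isSquare_neg_one_three_pow_odd (m : ℕ) :
    ¬ IsSquare (-1 : GaloisField 3 (2 * m + 1)) := by
  let _ : Fintype (GaloisField 3 (2 * m + 1)) := Fintype.ofFinite _
  have hcard : Fintype.card (GaloisField 3 (2 * m + 1)) = 9 ^ m * 3 := by
    rw [← Nat.card_eq_fintype_card, GaloisField.card 3 (2 * m + 1) (by omega), pow_succ, pow_mul]
    norm_num
  rw [FiniteField.isSquare_neg_one_iff, hcard, Nat.mul_mod, Nat.pow_mod]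
  norm_num

section NegOneNotSquare

variable {F : Type*} [Field F]

lemma eq_zero_of_isSquare_of_add_eq_zero (h : ¬ IsSquare (-1 : F)) {x y : F}
    (hx : IsSquare x) (hy : IsSquare y) (hxy : x + y = 0) : x = 0 := by
  by_contra hx₀
  apply h
  have : (-1 : F) = y * x⁻¹ := by
    rw [eq_neg_of_add_eq_zero_right hxy, neg_mul, mul_inv_cancel₀ hx₀]
  exact this ▸ hy.mul hx.inv

lemma eq_of_signed_add_eq_zero (h : ¬ IsSquare (-1 : F)) {x₁ x₂ c₁ c₂ : F}
    (hc₁ : c₁ = 1 ∨ c₁ = -1) (hc₂ : c₂ = 1 ∨ c₂ = -1) (hx₁ : x₁ ≠ 0)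
    (hs₁ : IsSquare x₁) (hs₂ : IsSquare x₂) (hlin : c₁ * x₁ + c₂ * x₂ = 0) : x₁ = x₂ := by
  have hsum : x₁ + x₂ ≠ 0 := fun h0 => hx₁ (eq_zero_of_isSquare_of_add_eq_zero h hs₁ hs₂ h0)
  rcases hc₁ with rfl | rfl <;> rcases hc₂ with rfl | rfl
  · exact absurd (by linear_combination hlin) hsum
  · linear_combination hlin
  · linear_combination -hlin
  · exact absurd (by linear_combination -hlin) hsum

end NegOneNotSquare

theorem stmt_3_general (m : ℕ) :
    let F := GaloisField 3 (2 * m + 1)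
    let d := 2 * 3 ^ m + 1
    (∀ x₁ x₂ c₁ c₂ : F, (c₁ = 1 ∨ c₁ = -1) → (c₂ = 1 ∨ c₂ = -1) →
      x₁ ≠ 0 → IsSquare x₁ → x₂ ≠ 0 → IsSquare x₂ →
      c₁ * x₁ + c₂ * x₂ = 0 → c₁ * x₁ ^ d + c₂ * x₂ ^ d = 0 → x₁ = x₂) ∧
    ¬ ∃ (x₁ x₂ c₁ c₂ : F), x₁ ≠ x₂ ∧ (c₁ = 1 ∨ c₁ = -1) ∧ (c₂ = 1 ∨ c₂ = -1) ∧
      x₁ ≠ 0 ∧ IsSquare x₁ ∧ x₂ ≠ 0 ∧ IsSquare x₂ ∧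
      c₁ * x₁ + c₂ * x₂ = 0 ∧ c₁ * x₁ ^ d + c₂ * x₂ ^ d = 0 := by
  intro F d
  have h := GaloisField.not_isSquare_neg_one_three_pow_odd m
  refine ⟨fun x₁ x₂ c₁ c₂ hc₁ hc₂ hx₁ hs₁ _ hs₂ hlin _ =>
    eq_of_signed_add_eq_zero h hc₁ hc₂ hx₁ hs₁ hs₂ hlin, ?_⟩
  rintro ⟨x₁, x₂, c₁, c₂, hne, hc₁, hc₂, hx₁, hs₁, -, hs₂, hlin, -⟩
  exact hne (eq_of_signed_add_eq_zero h hc₁ hc₂ hx₁ hs₁ hs₂ hlin)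

/-- If x₁, x₂ are nonzero squares in GF(3^{2m+1}) with c₁x₁ + c₂x₂ = 0 and
c₁x₁^d + c₂x₂^d = 0 for c₁, c₂ ∈ {1, -1}, then x₁ = x₂; in particular no
2-element subset of the nonzero squares satisfies the system. -/
theorem stmt_3 (m : ℕ) (hm : 1 ≤ m) :
    let F := GaloisField 3 (2 * m + 1)
    let d := 2 * 3 ^ m + 1
    (∀ x₁ x₂ c₁ c₂ : F, (c₁ = 1 ∨ c₁ = -1) → (c₂ = 1 ∨ c₂ = -1) →
      x₁ ≠ 0 → IsSquare x₁ → x₂ ≠ 0 → IsSquare x₂ →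
      c₁ * x₁ + c₂ * x₂ = 0 → c₁ * x₁ ^ d + c₂ * x₂ ^ d = 0 → x₁ = x₂) ∧
    ¬ ∃ (x₁ x₂ c₁ c₂ : F), x₁ ≠ x₂ ∧ (c₁ = 1 ∨ c₁ = -1) ∧ (c₂ = 1 ∨ c₂ = -1) ∧
      x₁ ≠ 0 ∧ IsSquare x₁ ∧ x₂ ≠ 0 ∧ IsSquare x₂ ∧
      c₁ * x₁ + c₂ * x₂ = 0 ∧ c₁ * x₁ ^ d + c₂ * x₂ ^ d = 0 :=
  stmt_3_general m
end

section
/- Let m ≥ 2, n = 2m+1, q = 3^n, and d = 2·3^m + 1. Suppose y₁, y₂ ∈ GF(q)* satisfy 1 + y₁ + y₂ = 0 and 1 + y₁^d + y₂^d = 0. Then y₁ = y₂ = 1. -/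
/-- Dobbertin's lemma: if y₁, y₂ ∈ GF(3^{2m+1})*, m ≥ 2, satisfy 1 + y₁ + y₂ = 0 and
1 + y₁^d + y₂^d = 0 with d = 2·3^m + 1, then y₁ = y₂ = 1. -/
theorem stmt_4 (m : ℕ) (hm : 2 ≤ m) (y₁ y₂ : GaloisField 3 (2 * m + 1))
    (h₁ : y₁ ≠ 0) (h₂ : y₂ ≠ 0)
    (e₁ : 1 + y₁ + y₂ = 0) (e₂ : 1 + y₁ ^ (2 * 3 ^ m + 1) + y₂ ^ (2 * 3 ^ m + 1) = 0) :
    y₁ = 1 ∧ y₂ = 1 := by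
  let K := GaloisField 3 (2 * m + 1)
  have h3 : (3 : GaloisField 3 (2 * m + 1)) = 0 := by
    exact_mod_cast CharP.cast_eq_zero (GaloisField 3 (2 * m + 1)) 3
  -- rewrite the exponent d = 2*3^m + 1
  have hd : ∀ y : GaloisField 3 (2 * m + 1), y ^ (2 * 3 ^ m + 1) = (y ^ (3 ^ m)) ^ 2 * y := by
    intro y
    rw [pow_add, pow_one, mul_comm 2 (3 ^ m), pow_mul]
  set A := y₁ ^ (3 ^ m) with hAdef
  set B := y₂ ^ (3 ^ m) with hBdef
  -- Frobenius^m applied to e₁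
  have hA : 1 + A + B = 0 := by
    have h0 : (1 + y₁ + y₂) ^ (3 ^ m : ℕ) = 0 := by
      rw [e₁]; exact zero_pow (by positivity)
    rwa [add_pow_char_pow, add_pow_char_pow, one_pow] at h0
  have he2 : 1 + A ^ 2 * y₁ + B ^ 2 * y₂ = 0 := by
    rw [hd, hd] at e₂; exact e₂
  have hy2 : y₂ = -1 - y₁ := by linear_combination e₁
  have hB : B = -1 - A := by linear_combination hA
  rw [hB, hy2] at he2
  -- key factorization
  have key : (A - 1) * (A - y₁) = 0 := by
    linear_combination -he2 - (A + A * y₁) * h3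
  -- in both cases y₁ = 1
  have hy1 : y₁ = 1 := by
    rcases mul_eq_zero.mp key with h | h
    · -- A = 1, so y₁^(3^m) = 1, hence y₁ = 1
      have hA1 : A = 1 := by linear_combination h
      have : (y₁ - 1) ^ (3 ^ m : ℕ) = 0 := by
        rw [sub_pow_char_pow, one_pow, ← hAdef, hA1, sub_self]
      have := pow_eq_zero_iff (n := 3 ^ m) (by positivity) |>.mp this
      linear_combination this
    · -- A = y₁, so y₁ ∈ GF(3)
      have hAy : A = y₁ := by linear_combination h
      have hq : y₁ ^ ((3 : ℕ) ^ (2 * m + 1)) = y₁ := by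
        have : Fintype (GaloisField 3 (2 * m + 1)) := Fintype.ofFinite _
        rw [← GaloisField.card 3 (2 * m + 1) (by omega), Nat.card_eq_fintype_card]
        exact FiniteField.pow_card y₁
      have hexp : (3 : ℕ) ^ (2 * m + 1) = 3 ^ m * 3 ^ m * 3 := by ring
      rw [hexp, pow_mul, pow_mul, ← hAdef, hAy, ← hAdef, hAy] at hq
      -- hq : y₁ ^ 3 = y₁
      have hfact : y₁ * (y₁ - 1) * (y₁ + 1) = 0 := by linear_combination hq
      rcases mul_eq_zero.mp hfact with h' | h'
      · rcases mul_eq_zero.mp h' with h'' | h''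
        · exact absurd h'' h₁
        · linear_combination h''
      · -- y₁ = -1 would force y₂ = 0
        exfalso
        apply h₂
        rw [hy2]
        linear_combination -h'
  refine ⟨hy1, ?_⟩
  rw [hy1] at hy2
  rw [hy2]
  linear_combination -h3
end

section
/- Let m ≥ 2, n = 2m+1, q = 3^n, d = 2·3^m + 1, and assume the Dobbertin lemma: the only solution in GF(q)* × GF(q)* of 1 + y₁ + y₂ = 0 and 1 + y₁^d + y₂^d = 0 is y₁ = y₂ = 1. Then there is no 3-element subset {x₁, x₂, x₃} of the nonzero squares of GF(q) satisfying c₁x₁ + c₂x₂ + c₃x₃ = 0 and c₁x₁^d + c₂x₂^d + c₃x₃^d = 0 for any choice of c₁, c₂, c₃ ∈ {1, -1}. -/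
/-- Assuming Dobbertin's lemma, no 3-element subset {x₁,x₂,x₃} of the nonzero squares of
GF(3^{2m+1}) satisfies c₁x₁ + c₂x₂ + c₃x₃ = 0 and c₁x₁^d + c₂x₂^d + c₃x₃^d = 0
for any c₁, c₂, c₃ ∈ {1, -1}. -/
theorem stmt_5 (m : ℕ) (hm : 2 ≤ m)
    (hDob : ∀ y₁ y₂ : GaloisField 3 (2 * m + 1), y₁ ≠ 0 → y₂ ≠ 0 →
      1 + y₁ + y₂ = 0 → 1 + y₁ ^ (2 * 3 ^ m + 1) + y₂ ^ (2 * 3 ^ m + 1) = 0 →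
      y₁ = 1 ∧ y₂ = 1) :
    ¬ ∃ (x₁ x₂ x₃ c₁ c₂ c₃ : GaloisField 3 (2 * m + 1)),
      x₁ ≠ x₂ ∧ x₁ ≠ x₃ ∧ x₂ ≠ x₃ ∧
      (c₁ = 1 ∨ c₁ = -1) ∧ (c₂ = 1 ∨ c₂ = -1) ∧ (c₃ = 1 ∨ c₃ = -1) ∧
      x₁ ≠ 0 ∧ IsSquare x₁ ∧ x₂ ≠ 0 ∧ IsSquare x₂ ∧ x₃ ≠ 0 ∧ IsSquare x₃ ∧
      c₁ * x₁ + c₂ * x₂ + c₃ * x₃ = 0 ∧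
      c₁ * x₁ ^ (2 * 3 ^ m + 1) + c₂ * x₂ ^ (2 * 3 ^ m + 1) + c₃ * x₃ ^ (2 * 3 ^ m + 1) = 0 := by
  rintro ⟨x₁, x₂, x₃, c₁, c₂, c₃, h12, h13, h23, hc₁, hc₂, hc₃,
    hx₁, -, hx₂, -, hx₃, -, heq1, heq2⟩
  have hdodd : Odd (2 * 3 ^ m + 1) := ⟨3 ^ m, by ring⟩
  have hcne : ∀ c : GaloisField 3 (2 * m + 1), (c = 1 ∨ c = -1) → c ≠ 0 := by
    rintro c (rfl | rfl) <;> simp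
  have hcd : ∀ c : GaloisField 3 (2 * m + 1), (c = 1 ∨ c = -1) →
      c ^ (2 * 3 ^ m + 1) = c := by
    rintro c (rfl | rfl)
    · simp
    · simpa using hdodd.neg_one_pow
  have hc1 := hcne c₁ hc₁
  have hc2 := hcne c₂ hc₂
  have hc3 := hcne c₃ hc₃
  set y₁ : GaloisField 3 (2 * m + 1) := (c₂ * x₂) / (c₁ * x₁) with hy₁def
  set y₂ : GaloisField 3 (2 * m + 1) := (c₃ * x₃) / (c₁ * x₁) with hy₂def
  have hy₁ : y₁ ≠ 0 := div_ne_zero (mul_ne_zero hc2 hx₂) (mul_ne_zero hc1 hx₁)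
  have hy₂ : y₂ ≠ 0 := div_ne_zero (mul_ne_zero hc3 hx₃) (mul_ne_zero hc1 hx₁)
  have e1 : 1 + y₁ + y₂ = 0 := by
    rw [hy₁def, hy₂def]
    field_simp
    linear_combination heq1
  have e2 : 1 + y₁ ^ (2 * 3 ^ m + 1) + y₂ ^ (2 * 3 ^ m + 1) = 0 := by
    rw [hy₁def, hy₂def, div_pow, div_pow, mul_pow, mul_pow, mul_pow,
      hcd c₁ hc₁, hcd c₂ hc₂, hcd c₃ hc₃]
    have hx₁d : x₁ ^ (2 * 3 ^ m + 1) ≠ 0 := pow_ne_zero _ hx₁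
    field_simp
    linear_combination heq2
  obtain ⟨hy1, hy2⟩ := hDob y₁ y₂ hy₁ hy₂ e1 e2
  have k2 : c₂ * x₂ = c₁ * x₁ := by
    rw [hy₁def, div_eq_one_iff_eq (mul_ne_zero hc1 hx₁)] at hy1
    exact hy1
  have k3 : c₃ * x₃ = c₁ * x₁ := by
    rw [hy₂def, div_eq_one_iff_eq (mul_ne_zero hc1 hx₁)] at hy2
    exact hy2
  have e₂ : x₂ = x₁ ∨ x₂ = -x₁ := by
    rcases hc₁ with rfl | rfl <;> rcases hc₂ with rfl | rfl
    · left; linear_combination k2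
    · right; linear_combination -k2
    · right; linear_combination k2
    · left; linear_combination -k2
  have e₃ : x₃ = x₁ ∨ x₃ = -x₁ := by
    rcases hc₁ with rfl | rfl <;> rcases hc₃ with rfl | rfl
    · left; linear_combination k3
    · right; linear_combination -k3
    · right; linear_combination k3
    · left; linear_combination -k3
  rcases e₂ with rfl | rfl
  · exact h12 rfl
  · rcases e₃ with rfl | rfl
    · exact h13 rfl
    · exact h23 rfl
end

section
/- Let m ≥ 2, n = 2m+1, q = 3^n, d = 2·3^m + 1, and d₀ = 3 - 2·3^{m+1} interpreted as an exponent modulo q - 1. For every z ∈ GF(q) with z ∉ GF(3) (so in particular z + 1 ≠ 0 and z^{3^{m+1}+2} + 1 ≠ 0 whenever the right side below is defined), the following identity holds: ((z^d + 1)/(z+1)^d)^{d₀} - 1 = z·(z^{3^{m+1}+1} - 1)² / (z^{3^{m+1}+2} + 1)², provided z^{3^{m+1}+2} + 1 ≠ 0. -/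
/-!
Put s = z^{3^m} and t = z^{3^{m+1}} = s³. As z^{3^{2m+1}} = z, the additive map x ↦ x^{3^{m+1}}
sends (z, s) to (t, z), while cubing sends it to (z³, t). Writing
B = (z^d + 1)/(z + 1)^d = (z s² + 1)/((z + 1)(s + 1)²), we have B^{d₀} = B³/(B^{3^{m+1}})², and both
powers are rational functions of z and t alone. Using (z + 1)³ = z³ + 1, the claim reduces to the
polynomial identity (z³t² + 1)(z + 1) - (t z² + 1)² = z (t z - 1)².
-/

theorem zpow_three_sub_two_mul_three_pow {G₀ : Type*} [GroupWithZero G₀] (a : G₀) (k : ℕ) :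
    a ^ ((3 : ℤ) - 2 * 3 ^ k) = a ^ 3 / (a ^ 3 ^ k) ^ 2 := by
  rcases eq_or_ne a 0 with rfl | ha
  · have : (3 : ℤ) - 2 * 3 ^ k ≠ 0 := by omega
    simp [zero_zpow _ this]
  · rw [zpow_sub₀ ha, ← pow_mul, mul_comm]
    norm_cast

theorem pow_two_mul_add_one {M : Type*} [CommMonoid M] (x : M) (n : ℕ) :
    x ^ (2 * n + 1) = x * (x ^ n) ^ 2 := by
  rw [pow_succ', pow_mul']

section
variable {K : Type*} [Field K]

theorem mul_sq_add_one_div_pow {q : ℕ} (hq : ∀ x y : K, (x + y) ^ q = x ^ q + y ^ q) (z s : K) :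
    ((z * s ^ 2 + 1) / ((z + 1) * (s + 1) ^ 2)) ^ q
      = (z ^ q * (s ^ q) ^ 2 + 1) / ((z ^ q + 1) * (s ^ q + 1) ^ 2) := by
  simp only [div_pow, mul_pow, hq, one_pow, pow_right_comm _ 2]

theorem div_sq_sub_one_eq [CharP K 3] {z t : K} (hz : z + 1 ≠ 0) (ht : t + 1 ≠ 0)
    (hden : t * z ^ 2 + 1 ≠ 0) :
    (z ^ 3 * t ^ 2 + 1) / ((z ^ 3 + 1) * (t + 1) ^ 2)
        / ((t * z ^ 2 + 1) / ((t + 1) * (z + 1) ^ 2)) ^ 2 - 1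
      = z * (t * z - 1) ^ 2 / (t * z ^ 2 + 1) ^ 2 := by
  have hcancel : (z ^ 3 * t ^ 2 + 1) / ((z + 1) ^ 3 * (t + 1) ^ 2)
      / ((t * z ^ 2 + 1) / ((t + 1) * (z + 1) ^ 2)) ^ 2
      = (z ^ 3 * t ^ 2 + 1) * (z + 1) / (t * z ^ 2 + 1) ^ 2 := by
    field_simp
  rw [show z ^ 3 + 1 = (z + 1) ^ 3 by rw [add_pow_char, one_pow], hcancel,
    div_sub_one (pow_ne_zero 2 hden)]
  ring

end

theorem GaloisField.pow_card {p : ℕ} [Fact p.Prime] {n : ℕ} (hn : n ≠ 0)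
    (x : GaloisField p n) : x ^ p ^ n = x := by
  have := Fintype.ofFinite (GaloisField p n)
  rw [← GaloisField.card p n hn, Nat.card_eq_fintype_card, FiniteField.pow_card]

theorem stmt_6_general (m : ℕ) (z : GaloisField 3 (2 * m + 1))
    (hz2 : z ≠ -1)
    (hden : z ^ (3 ^ (m + 1) + 2) + 1 ≠ 0) :
    ((z ^ (2 * 3 ^ m + 1) + 1) / (z + 1) ^ (2 * 3 ^ m + 1)) ^ ((3 : ℤ) - 2 * 3 ^ (m + 1)) - 1
      = z * (z ^ (3 ^ (m + 1) + 1) - 1) ^ 2 / (z ^ (3 ^ (m + 1) + 2) + 1) ^ 2 := by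
  have hsz : (z ^ 3 ^ m) ^ 3 ^ (m + 1) = z := by
    rw [← pow_mul, ← pow_add, show m + (m + 1) = 2 * m + 1 by ring,
      GaloisField.pow_card (by omega)]
  have hst : (z ^ 3 ^ m) ^ 3 = z ^ 3 ^ (m + 1) := by rw [← pow_mul, ← pow_succ]
  have hz1 : z + 1 ≠ 0 := fun h ↦ hz2 (eq_neg_of_add_eq_zero_left h)
  have ht1 : z ^ 3 ^ (m + 1) + 1 ≠ 0 := by
    simpa only [add_pow_char_pow, one_pow] using pow_ne_zero (3 ^ (m + 1)) hz1
  rw [pow_two_mul_add_one, pow_two_mul_add_one (z + 1), add_pow_char_pow, one_pow,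
    zpow_three_sub_two_mul_three_pow, mul_sq_add_one_div_pow (add_pow_char · · 3),
    mul_sq_add_one_div_pow (add_pow_char_pow · · 3 (m + 1)), hst, hsz,
    pow_succ z (3 ^ (m + 1)), pow_add z (3 ^ (m + 1)) 2]
  rw [pow_add z] at hden
  exact div_sq_sub_one_eq hz1 ht1 hden

/-- For z ∈ GF(3^{2m+1}) \ GF(3) with z^{3^{m+1}+2} + 1 ≠ 0, with d = 2·3^m+1 and
d₀ = 3 - 2·3^{m+1} (a possibly negative exponent, interpreted via zpow),
((z^d + 1)/(z+1)^d)^{d₀} - 1 = z·(z^{3^{m+1}+1} - 1)² / (z^{3^{m+1}+2} + 1)². -/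
theorem stmt_6 (m : ℕ) (hm : 2 ≤ m) (z : GaloisField 3 (2 * m + 1))
    (hz0 : z ≠ 0) (hz1 : z ≠ 1) (hz2 : z ≠ -1)
    (hden : z ^ (3 ^ (m + 1) + 2) + 1 ≠ 0) :
    ((z ^ (2 * 3 ^ m + 1) + 1) / (z + 1) ^ (2 * 3 ^ m + 1)) ^ ((3 : ℤ) - 2 * 3 ^ (m + 1)) - 1
      = z * (z ^ (3 ^ (m + 1) + 1) - 1) ^ 2 / (z ^ (3 ^ (m + 1) + 2) + 1) ^ 2 :=
  stmt_6_general m z hz2 hden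
end

section
/- Let C be a ternary linear code of length v = (3^n - 1)/2 and dimension 2n (with n = 2m+1, m ≥ 2) whose nonzero weights are exactly w₁ = 3^{n-1} - 3^m, w₂ = 3^{n-1}, w₃ = 3^{n-1} + 3^m, and whose dual code has minimum distance at least 3 (so A₁⊥ = A₂⊥ = 0). Then the weight distribution is uniquely determined: A_{w₁} = (1/2)·3^m(1+3^m)(3^{2m+1} - 1), A_{w₂} = 2·3^{4m+1} + 3^{2m} - 1, and A_{w₃} = (1/2)·3^m(3^m - 1)(3^{2m+1} - 1). -/
/-!
Dual distance at least 3 means that restricting the code to any one or two coordinates is a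
surjective linear map, so on those coordinates the codewords are equidistributed over `𝔽₃`.
Double counting the pairs (codeword, nonzero coordinate) and (codeword, pair of nonzero
coordinates) then gives the first two Pless power moments `∑ wt c` and `∑ wt c ^ 2`. Since only
three nonzero weights occur, these two moments and the size `3 ^ (2n)` of the code form a
Vandermonde system for `A_{w₁}, A_{w₂}, A_{w₃}`, solved by Lagrange interpolation.
-/

open Finset Function

theorem AddMonoidHom.card_filter_comp_mul_card_of_surjective {G H : Type*} [AddGroup G]
    [Fintype G] [AddGroup H] [Fintype H] [DecidableEq H] (f : G →+ H) (hf : Surjective f)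
    (P : H → Prop) [DecidablePred P] :
    #{g | P (f g)} * Fintype.card H = #{h | P h} * Fintype.card G := by
  have hfiber : ∀ t : Finset H, #{g | f g ∈ t} = #t * #{g | f g = 0} := by
    intro t
    rw [card_eq_sum_card_fiberwise (f := f) (t := t) (fun g hg => by simpa using hg),
      sum_const_nat fun h hh => ?_]
    rw [filter_filter, ← AddMonoidHom.card_fiber_eq_of_mem_range f (hf h) (hf 0)]
    congr 1
    exact filter_congr fun g _ => ⟨And.right, fun e => ⟨e ▸ hh, e⟩⟩
  have hP := hfiber {h | P h}
  have huniv := hfiber univ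
  simp only [mem_filter, mem_univ, true_and, filter_true, card_univ] at hP huniv
  rw [hP, huniv]
  ring

section

variable {F ι : Type*} [Field F] [Fintype ι] [DecidableEq F] (C : Submodule F (ι → F))

noncomputable def weightDistribution (w : ℕ) : ℕ := {c | c ∈ C ∧ hammingNorm c = w}.ncard

theorem surjective_restrict_of_le_hammingNorm [DecidableEq ι] {d : ℕ}
    (hdual : ∀ x : ι → F, (∀ c ∈ C, ∑ i, x i * c i = 0) → x ≠ 0 → d ≤ hammingNorm x)
    (s : Finset ι) (hs : #s < d) :
    Surjective ((LinearMap.funLeft F F ((↑) : s → ι)).comp C.subtype) := by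
  set L := (LinearMap.funLeft F F ((↑) : s → ι)).comp C.subtype
  rw [← LinearMap.range_eq_top]
  by_contra hL
  obtain ⟨φ, hφ, hker⟩ :=
    (LinearMap.range L).exists_le_ker_of_lt_top (lt_top_iff_ne_top.2 hL)
  -- A functional vanishing on the image gives a nonzero dual word supported on `s`.
  let x : ι → F := fun i => if h : i ∈ s then φ (Pi.single ⟨i, h⟩ 1) else 0
  have horth : ∀ c ∈ C, ∑ i, x i * c i = 0 := by
    intro c hc
    have hφc : φ (L ⟨c, hc⟩) = 0 := hker (LinearMap.mem_range_self L ⟨c, hc⟩)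
    have hsingle : ∀ k : s, (fun j => if k = j then (1 : F) else 0) = Pi.single k 1 :=
      fun k => funext fun j => by simp [Pi.single_apply, eq_comm]
    rw [LinearMap.pi_apply_eq_sum_univ] at hφc
    simp only [hsingle] at hφc
    rw [← hφc, ← sum_subset (subset_univ s), ← sum_coe_sort s]
    · simp [x, L, mul_comm]
    · intro i _ hi
      simp [x, hi]
  have hx : x ≠ 0 := by
    refine fun hx => hφ (LinearMap.pi_ext' fun k => LinearMap.ext_ring ?_)
    simpa [x] using congrFun hx k
  have hsupp : hammingNorm x ≤ #s :=
    card_le_card fun i hi => by_contra fun h => (mem_filter.1 hi).2 (dif_neg h)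
  exact (hdual x horth hx).not_gt (hsupp.trans_lt hs)

variable [Fintype C]

theorem weightDistribution_eq_card (w : ℕ) :
    weightDistribution C w = #{c : C | hammingNorm (c : ι → F) = w} := by
  rw [weightDistribution, ← Nat.card_coe_set_eq, ← Fintype.card_subtype,
    ← Nat.card_eq_fintype_card]
  exact Nat.card_congr (Equiv.subtypeSubtypeEquivSubtypeInter (· ∈ C) _).symm

theorem weightDistribution_zero : weightDistribution C 0 = 1 := by
  simp [weightDistribution_eq_card, hammingNorm_eq_zero, filter_eq']

theorem sum_comp_hammingNorm {M : Type*} [AddCommMonoid M] (f : ℕ → M) {W : Finset ℕ}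
    (hW₀ : 0 ∉ W) (hW : ∀ c ∈ C, c ≠ 0 → hammingNorm c ∈ W) :
    ∑ c : C, f (hammingNorm (c : ι → F)) =
      f 0 + ∑ w ∈ W, weightDistribution C w • f w := by
  have hmaps : ∀ c ∈ (univ : Finset C), hammingNorm (c : ι → F) ∈ insert 0 W := by
    intro c _
    by_cases hc : (c : ι → F) = 0
    · simp [hc]
    · exact mem_insert_of_mem (hW c c.2 hc)
  have hfiber : ∀ w, ∑ c ∈ univ.filter fun c : C => hammingNorm (c : ι → F) = w,
      f (hammingNorm (c : ι → F)) = weightDistribution C w • f w := by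
    intro w
    rw [sum_congr rfl fun c hc => congrArg f (mem_filter.1 hc).2, sum_const,
      weightDistribution_eq_card]
  rw [← sum_fiberwise_of_maps_to hmaps, sum_insert hW₀, hfiber, weightDistribution_zero,
    one_smul, sum_congr rfl fun w _ => hfiber w]

theorem sum_hammingNorm_eq_sum_card :
    ∑ c : C, hammingNorm (c : ι → F) = ∑ i, #{c : C | (c : ι → F) i ≠ 0} := by
  simp only [hammingNorm, card_filter]
  exact sum_comm

theorem sum_hammingNorm_sq_eq_sum_card [DecidableEq ι] :
    ∑ c : C, hammingNorm (c : ι → F) ^ 2 =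
      ∑ i, ∑ j, #{c : C | ∀ k ∈ ({i, j} : Finset ι), (c : ι → F) k ≠ 0} := by
  simp only [hammingNorm, card_filter, sq, sum_mul_sum, forall_mem_insert, mem_singleton,
    forall_eq, ite_zero_mul_ite_zero, mul_one]
  rw [sum_comm]
  exact sum_congr rfl fun i _ => sum_comm

variable [Fintype F] [DecidableEq ι] {d : ℕ}
  (hdual : ∀ x : ι → F, (∀ c ∈ C, ∑ i, x i * c i = 0) → x ≠ 0 → d ≤ hammingNorm x)
include hdual

theorem card_pow_mul_card_forall_ne_zero (s : Finset ι) (hs : #s < d) :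
    Fintype.card F ^ #s * #{c : C | ∀ k ∈ s, (c : ι → F) k ≠ 0} =
      (Fintype.card F - 1) ^ #s * Fintype.card C := by
  have hcount := AddMonoidHom.card_filter_comp_mul_card_of_surjective
    ((LinearMap.funLeft F F ((↑) : s → ι)).comp C.subtype).toAddMonoidHom
    (surjective_restrict_of_le_hammingNorm C hdual s hs) (fun y : s → F => ∀ k, y k ≠ 0)
  have hnonzero : #{y : s → F | ∀ k, y k ≠ 0} = (Fintype.card F - 1) ^ #s := by
    rw [← Fintype.card_subtype,
      Fintype.card_congr (Equiv.subtypePiEquivPi (p := fun _ a => a ≠ 0)), Fintype.card_pi]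
    simp [Fintype.card_subtype_compl]
  simp only [Fintype.card_fun, Fintype.card_coe, hnonzero] at hcount
  rw [← hcount, mul_comm]
  congr 2
  ext c
  simp

theorem card_mul_sum_hammingNorm (hd : 1 < d) :
    (Fintype.card F : ℚ) * ∑ c : C, (hammingNorm (c : ι → F) : ℚ) =
      Fintype.card ι * (Fintype.card F - 1) * Fintype.card C := by
  have hcoord : ∀ i, (Fintype.card F : ℚ) * #{c : C | (c : ι → F) i ≠ 0} =
      (Fintype.card F - 1) * Fintype.card C := fun i => by
    have h := card_pow_mul_card_forall_ne_zero C hdual {i} (by simpa using hd)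
    simp only [card_singleton, pow_one, mem_singleton, forall_eq] at h
    qify [(Fintype.card_pos : 1 ≤ Fintype.card F)] at h
    exact h
  rw [← Nat.cast_sum, sum_hammingNorm_eq_sum_card, Nat.cast_sum, mul_sum,
    sum_congr rfl fun i _ => hcoord i, sum_const, card_univ, nsmul_eq_mul, mul_assoc]

theorem card_sq_mul_sum_hammingNorm_sq (hd : 2 < d) :
    (Fintype.card F : ℚ) ^ 2 * ∑ c : C, (hammingNorm (c : ι → F) : ℚ) ^ 2 =
      Fintype.card ι * (Fintype.card F - 1) *
        (Fintype.card F + (Fintype.card ι - 1) * (Fintype.card F - 1)) * Fintype.card C := by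
  have hq : 1 ≤ Fintype.card F := Fintype.card_pos
  set q : ℚ := (Fintype.card F : ℚ)
  have hpair : ∀ i j, q ^ 2 * #{c : C | ∀ k ∈ ({i, j} : Finset ι), (c : ι → F) k ≠ 0} =
      (q - 1) ^ 2 * Fintype.card C + if i = j then (q - 1) * Fintype.card C else 0 := by
    intro i j
    rcases eq_or_ne i j with rfl | hij
    · have h := card_pow_mul_card_forall_ne_zero C hdual {i} (by simp; omega)
      rw [card_singleton, pow_one, pow_one] at h
      qify [hq] at h
      rw [if_pos rfl, pair_eq_singleton, sq, mul_assoc, h]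
      ring
    · rw [if_neg hij, add_zero]
      have h := card_pow_mul_card_forall_ne_zero C hdual {i, j} ((card_le_two).trans_lt hd)
      qify [hq, card_pair hij] at h
      exact h
  simp only [← Nat.cast_pow, ← Nat.cast_sum, sum_hammingNorm_sq_eq_sum_card]
  push_cast
  simp only [mul_sum, hpair, sum_add_distrib, Fintype.sum_ite_eq, sum_const, card_univ,
    nsmul_eq_mul]
  ring

theorem weightDistribution_power_moments (hd : 2 < d) {W : Finset ℕ} (hW₀ : 0 ∉ W)
    (hW : ∀ c ∈ C, c ≠ 0 → hammingNorm c ∈ W) :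
    ∑ w ∈ W, (weightDistribution C w : ℚ) = Fintype.card C - 1 ∧
    (Fintype.card F : ℚ) * ∑ w ∈ W, (weightDistribution C w : ℚ) * w =
      Fintype.card ι * (Fintype.card F - 1) * Fintype.card C ∧
    (Fintype.card F : ℚ) ^ 2 * ∑ w ∈ W, (weightDistribution C w : ℚ) * w ^ 2 =
      Fintype.card ι * (Fintype.card F - 1) *
        (Fintype.card F + (Fintype.card ι - 1) * (Fintype.card F - 1)) * Fintype.card C := by
  have hsum (f : ℕ → ℚ) := sum_comp_hammingNorm C f hW₀ hW
  have h₀ := hsum fun _ => 1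
  have h₁ := hsum fun w => w
  have h₂ := hsum fun w => w ^ 2
  simp only [sum_const, card_univ, nsmul_eq_mul, mul_one, Nat.cast_zero, ne_eq,
    OfNat.ofNat_ne_zero, not_false_eq_true, zero_pow, zero_add] at h₀ h₁ h₂
  refine ⟨by linarith, ?_, ?_⟩
  · rw [← card_mul_sum_hammingNorm C hdual (by omega), h₁]
  · rw [← card_sq_mul_sum_hammingNorm_sq C hdual hd, h₂]

end

theorem three_weight_distribution_of_moments {T A₁ A₂ A₃ : ℕ} (hT : 1 ≤ T)
    (h₀ : (A₁ + A₂ + A₃ : ℚ) = 9 * T ^ 4 - 1)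
    (h₁ : (A₁ * (T ^ 2 - T) + A₂ * T ^ 2 + A₃ * (T ^ 2 + T) : ℚ) =
      3 * T ^ 4 * (3 * T ^ 2 - 1))
    (h₂ : (A₁ * (T ^ 2 - T) ^ 2 + A₂ * (T ^ 2) ^ 2 + A₃ * (T ^ 2 + T) ^ 2 : ℚ) =
      3 * T ^ 6 * (3 * T ^ 2 - 1)) :
    2 * A₁ = T * (1 + T) * (3 * T ^ 2 - 1) ∧ A₂ = 2 * (3 * T ^ 4) + T ^ 2 - 1 ∧
      2 * A₃ = T * (T - 1) * (3 * T ^ 2 - 1) := by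
  qify [hT, show 1 ≤ 3 * T ^ 2 by nlinarith, show 1 ≤ 2 * (3 * T ^ 4) + T ^ 2 by nlinarith]
  have hT2 : (T : ℚ) ^ 2 ≠ 0 := by positivity
  -- Lagrange interpolation at the weights: weighting the three equations by the coefficients of
  -- `(X - wⱼ) * (X - wₖ)` isolates `(wᵢ - wⱼ) * (wᵢ - wₖ) * Aᵢ`.
  refine ⟨mul_left_cancel₀ hT2 ?_, mul_left_cancel₀ hT2 ?_, mul_left_cancel₀ hT2 ?_⟩
  · linear_combination h₂ - (2 * T ^ 2 + T) * h₁ + T ^ 2 * (T ^ 2 + T) * h₀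
  · linear_combination -(h₂ - 2 * T ^ 2 * h₁ + (T ^ 2 - T) * (T ^ 2 + T) * h₀)
  · linear_combination h₂ - (2 * T ^ 2 - T) * h₁ + (T ^ 2 - T) * T ^ 2 * h₀

theorem stmt_11_general (m : ℕ) (hm : 2 ≤ m)
    (n v w₁ w₂ w₃ : ℕ) (hn : n = 2 * m + 1) (hv : v = (3 ^ n - 1) / 2)
    (hw₁ : w₁ = 3 ^ (n - 1) - 3 ^ m) (hw₂ : w₂ = 3 ^ (n - 1)) (hw₃ : w₃ = 3 ^ (n - 1) + 3 ^ m)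
    (C : Submodule (ZMod 3) (Fin v → ZMod 3))
    (wt : (Fin v → ZMod 3) → ℕ)
    (hwt : ∀ c, wt c = (Finset.univ.filter (fun i => c i ≠ 0)).card)
    (hdim : Module.finrank (ZMod 3) C = 2 * n)
    (hweights : ∀ c ∈ C, c ≠ 0 → wt c = w₁ ∨ wt c = w₂ ∨ wt c = w₃)
    (hdual : ∀ x : Fin v → ZMod 3, (∀ c ∈ C, ∑ i, x i * c i = 0) → x ≠ 0 → 3 ≤ wt x) :
    2 * {c : Fin v → ZMod 3 | c ∈ C ∧ wt c = w₁}.ncard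
        = 3 ^ m * (1 + 3 ^ m) * (3 ^ (2 * m + 1) - 1) ∧
    {c : Fin v → ZMod 3 | c ∈ C ∧ wt c = w₂}.ncard = 2 * 3 ^ (4 * m + 1) + 3 ^ (2 * m) - 1 ∧
    2 * {c : Fin v → ZMod 3 | c ∈ C ∧ wt c = w₃}.ncard
        = 3 ^ m * (3 ^ m - 1) * (3 ^ (2 * m + 1) - 1) := by
  classical
  obtain rfl : wt = hammingNorm := funext hwt
  subst hn hw₁ hw₂ hw₃
  set T := 3 ^ m with hT
  have hT3 : 3 ≤ T := Nat.le_self_pow (by omega) 3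
  have hTT : T < T ^ 2 := by nlinarith
  have h3 : 3 ^ (2 * m + 1) = 3 * T ^ 2 := by rw [hT]; ring
  have hvq : (v : ℚ) = (3 * T ^ 2 - 1) / 2 := by
    obtain ⟨k, hk⟩ : Odd (3 * T ^ 2) := (by decide : Odd 3).mul ((by decide : Odd 3).pow.pow)
    rw [h3, hk] at hv
    have h2v : (2 * v + 1 : ℚ) = 3 * T ^ 2 := by
      exact_mod_cast (by omega : 2 * v + 1 = 3 * T ^ 2)
    linarith
  have hcard : Fintype.card C = 9 * T ^ 4 := by
    rw [Module.card_eq_pow_finrank (K := ZMod 3), ZMod.card, hdim, hT]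
    ring
  rw [Nat.add_sub_cancel, pow_mul', ← hT] at hweights ⊢
  obtain ⟨h₀, h₁, h₂⟩ := weightDistribution_power_moments C hdual (by norm_num)
    (W := {T ^ 2 - T, T ^ 2, T ^ 2 + T}) (by simp; omega) (by simpa using hweights)
  rw [sum_insert (by simp; omega), sum_insert (by simp; omega), sum_singleton] at h₀ h₁ h₂
  simp only [ZMod.card, Fintype.card_fin, hcard, hvq] at h₀ h₁ h₂
  push_cast [hTT.le] at h₀ h₁ h₂
  rw [h3, show 3 ^ (4 * m + 1) = 3 * T ^ 4 by rw [hT]; ring]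
  show 2 * weightDistribution C (T ^ 2 - T) = _ ∧ weightDistribution C (T ^ 2) = _ ∧
    2 * weightDistribution C (T ^ 2 + T) = _
  exact three_weight_distribution_of_moments (by omega) (by linear_combination h₀)
    (by linear_combination h₁ / 3) (by linear_combination h₂ / 9)

/-- A ternary linear code of length (3^n-1)/2, dimension 2n (n = 2m+1, m ≥ 2), whose
nonzero weights are exactly 3^{n-1}-3^m, 3^{n-1}, 3^{n-1}+3^m and whose dual has minimum
distance ≥ 3, has the uniquely determined weight distribution of Table 1. -/
theorem stmt_11 (m : ℕ) (hm : 2 ≤ m)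
    (n v w₁ w₂ w₃ : ℕ) (hn : n = 2 * m + 1) (hv : v = (3 ^ n - 1) / 2)
    (hw₁ : w₁ = 3 ^ (n - 1) - 3 ^ m) (hw₂ : w₂ = 3 ^ (n - 1)) (hw₃ : w₃ = 3 ^ (n - 1) + 3 ^ m)
    (C : Submodule (ZMod 3) (Fin v → ZMod 3))
    (wt : (Fin v → ZMod 3) → ℕ)
    (hwt : ∀ c, wt c = (Finset.univ.filter (fun i => c i ≠ 0)).card)
    (hdim : Module.finrank (ZMod 3) C = 2 * n)
    (hweights : ∀ c ∈ C, c ≠ 0 → wt c = w₁ ∨ wt c = w₂ ∨ wt c = w₃)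
    (hoccur : ∀ w ∈ ({w₁, w₂, w₃} : Set ℕ), ∃ c ∈ C, c ≠ 0 ∧ wt c = w)
    (hdual : ∀ x : Fin v → ZMod 3, (∀ c ∈ C, ∑ i, x i * c i = 0) → x ≠ 0 → 3 ≤ wt x) :
    2 * {c : Fin v → ZMod 3 | c ∈ C ∧ wt c = w₁}.ncard
        = 3 ^ m * (1 + 3 ^ m) * (3 ^ (2 * m + 1) - 1) ∧
    {c : Fin v → ZMod 3 | c ∈ C ∧ wt c = w₂}.ncard = 2 * 3 ^ (4 * m + 1) + 3 ^ (2 * m) - 1 ∧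
    2 * {c : Fin v → ZMod 3 | c ∈ C ∧ wt c = w₃}.ncard
        = 3 ^ m * (3 ^ m - 1) * (3 ^ (2 * m + 1) - 1) :=
  stmt_11_general m hm n v w₁ w₂ w₃ hn hv hw₁ hw₂ hw₃ C wt hwt hdim hweights hdual
end

section
/- Let m ≥ 2, n = 2m+1, q = 3^n, d = 2·3^m + 1 odd, and assume: (a) for every z ∈ GF(q)\GF(3), the total number of pairs (x,y) ∈ GF(q)² with x+y+z+1 = 0, x^d+y^d+z^d+1 = 0, (x+1)(x+z) ≠ 0 plus the number with x+y-z+1 = 0, x^d+y^d-z^d+1 = 0, (x+1)(x-z) ≠ 0 equals 2; and (b) no subset of at most 3 nonzero squares satisfies the corresponding homogeneous system. Then for every pair of distinct nonzero squares x₃, x₄ in GF(q), there exists exactly one 2-subset {x₁, x₂} of nonzero squares disjoint from {x₃, x₄} and signs c₁,...,c₄ ∈ {1,-1} with c₁x₁ + c₂x₂ + c₃x₃ + c₄x₄ = 0 and c₁x₁^d + c₂x₂^d + c₃x₃^d + c₄x₄^d = 0. Consequently the supports of weight-4 codewords of the dual code form a Steiner system S(2, 4, (q-1)/2). -/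
/-!
Dividing a signed relation `c₁x₁ + c₂x₂ + c₃x₃ + c₄x₄ = 0 = Σ cᵢxᵢ^d` by its last term gives
`u + v + w + 1 = 0 = u^d + v^d + w^d + 1` with `w = ±x₃/x₄`, i.e. a pair counted in (a).
Conversely, as `-1` is a non-square, every nonzero `t` is `±` a unique square `sqAbs t`, so such
a pair `(u, v)` yields the block `{sqAbs u · x₄, sqAbs v · x₄}`. Read up to signs, (b) says that in
characteristic 3 the equations `a + b + c = 0 = a^d + b^d + c^d` have only the solutions
`a = b = c`; this rules out every degenerate pair, so the two pairs counted in (a) are `(u, v)` and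
`(v, u)`, and both give the same block.
-/

open Finset

section SqAbs

variable {F : Type*} [Field F] [Fintype F] [DecidableEq F]

/-- `χ t * t` for the quadratic character `χ`; when `-1` is a non-square, the square among `±t`. -/
def sqAbs (t : F) : F := quadraticChar F t * t

theorem sqAbs_mul (a b : F) : sqAbs (a * b) = sqAbs a * sqAbs b := by
  simp only [sqAbs, map_mul, Int.cast_mul]; ring

theorem sqAbs_of_isSquare {a : F} (ha : IsSquare a) : sqAbs a = a := by
  rcases eq_or_ne a 0 with rfl | ha0
  · simp [sqAbs]
  · simp [sqAbs, (quadraticChar_one_iff_isSquare ha0).2 ha]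

theorem sqAbs_one : sqAbs (1 : F) = 1 := sqAbs_of_isSquare IsSquare.one

theorem sqAbs_eq_or (t : F) : sqAbs t = t ∨ sqAbs t = -t := by
  rcases eq_or_ne t 0 with rfl | ht
  · simp [sqAbs]
  · rcases quadraticChar_dichotomy ht with h | h <;> simp [sqAbs, h]

theorem exists_sign_mul_sqAbs (t : F) : ∃ c : F, (c = 1 ∨ c = -1) ∧ c * sqAbs t = t := by
  rcases sqAbs_eq_or t with h | h
  · exact ⟨1, Or.inl rfl, by rw [h, one_mul]⟩
  · exact ⟨-1, Or.inr rfl, by rw [h, neg_one_mul, neg_neg]⟩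

theorem sqAbs_ne_zero {t : F} (ht : t ≠ 0) : sqAbs t ≠ 0 := by
  rcases sqAbs_eq_or t with h | h <;> rw [h] <;> simpa

theorem eq_or_eq_neg_of_sqAbs_eq {a b : F} (h : sqAbs a = sqAbs b) : a = b ∨ a = -b := by
  rcases sqAbs_eq_or a with ha | ha <;> rcases sqAbs_eq_or b with hb | hb <;> rw [ha, hb] at h
  · exact Or.inl h
  · exact Or.inr h
  · exact Or.inr (neg_eq_iff_eq_neg.1 h)
  · exact Or.inl (neg_inj.1 h)

theorem sqAbs_ne_sqAbs {a b : F} (h : a ≠ b) (h' : a ≠ -b) : sqAbs a ≠ sqAbs b :=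
  fun e => (eq_or_eq_neg_of_sqAbs_eq e).elim h h'

theorem sqAbs_neg_one (hns : ¬ IsSquare (-1 : F)) : sqAbs (-1 : F) = 1 := by
  simp [sqAbs, quadraticChar_neg_one_iff_not_isSquare.2 hns]

theorem sqAbs_neg (hns : ¬ IsSquare (-1 : F)) (t : F) : sqAbs (-t) = sqAbs t := by
  rw [neg_eq_neg_one_mul, sqAbs_mul, sqAbs_neg_one hns, one_mul]

theorem sqAbs_sign (hns : ¬ IsSquare (-1 : F)) {c : F} (hc : c = 1 ∨ c = -1) : sqAbs c = 1 := by
  rcases hc with rfl | rfl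
  · exact sqAbs_one
  · exact sqAbs_neg_one hns

theorem isSquare_sqAbs (hns : ¬ IsSquare (-1 : F)) (t : F) : IsSquare (sqAbs t) := by
  rcases eq_or_ne t 0 with rfl | ht
  · simp [sqAbs]
  rcases quadraticChar_dichotomy ht with h | h
  · rw [sqAbs, h, Int.cast_one, one_mul]
    exact (quadraticChar_one_iff_isSquare ht).1 h
  · have : quadraticChar F (-t) = 1 := by
      rw [neg_eq_neg_one_mul, map_mul, quadraticChar_neg_one_iff_not_isSquare.2 hns, h]; rfl
    rw [sqAbs, h, Int.cast_neg, Int.cast_one, neg_one_mul]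
    exact (quadraticChar_one_iff_isSquare (neg_ne_zero.2 ht)).1 this

/-- The coefficient of `sqAbs t` is the sign of `t`, read off from which of `±t` lies in `A`. -/
theorem sum_image_sqAbs_pow {A : Finset F} (hA : ∀ t ∈ A, -t ∉ A) {k : ℕ} (hk : Odd k) :
    ∑ x ∈ A.image sqAbs, (if x ∈ A then 1 else -1) * x ^ k = ∑ t ∈ A, t ^ k := by
  rw [sum_image fun a ha b hb hab =>
    (eq_or_eq_neg_of_sqAbs_eq hab).resolve_right fun h => hA b hb (h ▸ ha)]
  refine sum_congr rfl fun t ht => ?_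
  rcases sqAbs_eq_or t with h | h
  · rw [h, if_pos ht, one_mul]
  · rw [h, if_neg (hA t ht), hk.neg_pow, neg_one_mul, neg_neg]

end SqAbs

theorem sign_mul_pow {M : Type*} [Monoid M] [HasDistribNeg M] {c : M} (hc : c = 1 ∨ c = -1)
    {d : ℕ} (hd : Odd d) (x : M) : c * x ^ d = (c * x) ^ d := by
  rcases hc with rfl | rfl
  · rw [one_mul, one_mul]
  · rw [neg_one_mul, neg_one_mul, hd.neg_pow]

theorem apply_eq_apply_of_ncard_eq_two {α β : Type*} {T : Set α} (hT : T.ncard = 2)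
    {σ : α → α} (hσT : ∀ p ∈ T, σ p ∈ T) (hσ : ∀ p ∈ T, σ p ≠ p) {φ : α → β}
    (hφ : ∀ p ∈ T, φ (σ p) = φ p) ⦃p q : α⦄ (hp : p ∈ T) (hq : q ∈ T) : φ p = φ q := by
  obtain ⟨a, b, -, rfl⟩ := Set.ncard_eq_two.1 hT
  rcases eq_or_ne p q with rfl | hpq
  · rfl
  · have hσp : σ p = q := by
      have h1 := hσT p hp
      have h2 := hσ p hp
      simp only [Set.mem_insert_iff, Set.mem_singleton_iff] at hp hq h1
      grind
    rw [← hσp, hφ p hp]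

section Relations

variable {F : Type*} [Field F] {d : ℕ}

/-- `s ∪ {x₃, x₄}` is the support of a weight-four codeword of the dual code. -/
def IsBlock (d : ℕ) (x₃ x₄ : F) (s : Finset F) : Prop :=
  s.card = 2 ∧ (∀ x ∈ s, x ≠ 0 ∧ IsSquare x) ∧ x₃ ∉ s ∧ x₄ ∉ s ∧
    ∃ x₁ x₂ c₁ c₂ c₃ c₄ : F,
      (s : Set F) = {x₁, x₂} ∧ x₁ ≠ x₂ ∧
      (c₁ = 1 ∨ c₁ = -1) ∧ (c₂ = 1 ∨ c₂ = -1) ∧ (c₃ = 1 ∨ c₃ = -1) ∧ (c₄ = 1 ∨ c₄ = -1) ∧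
      c₁ * x₁ + c₂ * x₂ + c₃ * x₃ + c₄ * x₄ = 0 ∧
      c₁ * x₁ ^ d + c₂ * x₂ ^ d + c₃ * x₃ ^ d + c₄ * x₄ ^ d = 0

/-- The pairs counted in hypothesis (a), for `w = z` and `w = -z`. -/
def relPairs (d : ℕ) (w : F) : Set (F × F) :=
  {p | p.1 + p.2 + w + 1 = 0 ∧ p.1 ^ d + p.2 ^ d + w ^ d + 1 = 0 ∧ (p.1 + 1) * (p.1 + w) ≠ 0}

/-- Hypothesis (b) up to signs. In characteristic 3, `a = b` forces `a = b = c`, which is always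
a solution. -/
def NoNontrivialTriple (F : Type*) [Field F] (d : ℕ) : Prop :=
  ∀ a b c : F, a ≠ 0 → b ≠ 0 → c ≠ 0 → a + b + c = 0 → a ^ d + b ^ d + c ^ d = 0 → a = b

theorem relPairs_neg (hd : Odd d) (z : F) :
    relPairs d (-z) = {p : F × F | p.1 + p.2 - z + 1 = 0 ∧ p.1 ^ d + p.2 ^ d - z ^ d + 1 = 0 ∧
      (p.1 + 1) * (p.1 - z) ≠ 0} := by
  ext p
  simp only [relPairs, Set.mem_ofPred_eq, hd.neg_pow, ← sub_eq_add_neg]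

theorem disjoint_relPairs_neg [CharP F 3] {z : F} (hz : z ≠ 0) :
    Disjoint (relPairs d z) (relPairs d (-z)) :=
  Set.disjoint_left.2 fun _ h h' =>
    hz (by linear_combination h'.1 - h.1 + z * CharP.ofNat_eq_zero F 3)

theorem swap_mem_relPairs {w : F} {p : F × F} (hp : p ∈ relPairs d w) :
    p.swap ∈ relPairs d w := by
  obtain ⟨u, v⟩ := p
  obtain ⟨h1, h2, hne⟩ := hp
  have : (v + 1) * (v + w) = (u + 1) * (u + w) := by linear_combination (v - u) * h1
  exact ⟨(by linear_combination h1 : v + u + w + 1 = 0),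
    (by linear_combination h2 : v ^ d + u ^ d + w ^ d + 1 = 0), this ▸ hne⟩

theorem div_mem_relPairs {t₁ t₂ t₃ t₄ : F} (h1 : t₁ + t₂ + t₃ + t₄ = 0)
    (h2 : t₁ ^ d + t₂ ^ d + t₃ ^ d + t₄ ^ d = 0) (h4 : t₄ ≠ 0) (h14 : t₁ + t₄ ≠ 0)
    (h13 : t₁ + t₃ ≠ 0) : (t₁ / t₄, t₂ / t₄) ∈ relPairs d (t₃ / t₄) := by
  refine ⟨?_, ?_, ?_⟩ <;> simp only [div_pow]
  · field_simp; linear_combination h1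
  · field_simp; linear_combination h2
  · field_simp; exact div_ne_zero (mul_ne_zero h14 h13) (pow_ne_zero 2 h4)

theorem ne_of_relation [CharP F 3] (hT : NoNontrivialTriple F d) (hd : Odd d) {u v w : F}
    (hw0 : w ≠ 0) (hw1 : w ≠ 1) (hw1' : w ≠ -1)
    (h1 : u + v + w + 1 = 0) (h2 : u ^ d + v ^ d + w ^ d + 1 = 0) :
    u ≠ 0 ∧ u ≠ 1 ∧ u ≠ w ∧ u ≠ v := by
  have h3 : (3 : F) = 0 := CharP.ofNat_eq_zero F 3
  refine ⟨fun hu => ?_, fun hu => ?_, fun hu => ?_, fun hu => ?_⟩ <;> subst hu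
  · have hv : v ≠ 0 := fun hv => hw1' (by linear_combination h1 - hv)
    refine hw1 (hT w 1 v hw0 one_ne_zero hv (by linear_combination h1) ?_)
    rw [zero_pow hd.pos.ne'] at h2
    linear_combination h2
  · have hv : v ≠ 0 := fun hv => hw1 (by linear_combination h1 - hv - h3)
    refine hw1' (hT w (-1) v hw0 (by simp) hv (by linear_combination h1 - h3) ?_)
    rw [hd.neg_one_pow]
    linear_combination h2 - h3
  · have hv : v ≠ 0 := fun hv => hw1 (by linear_combination -h1 + hv + u * h3)
    refine hw1' (neg_eq_iff_eq_neg.1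
      (hT (-u) 1 v (neg_ne_zero.2 hw0) one_ne_zero hv (by linear_combination h1 - u * h3) ?_))
    rw [hd.neg_pow]
    linear_combination h2 - u ^ d * h3
  · have hu : -u ≠ 0 := fun hu => hw1' (by linear_combination h1 + 2 * hu)
    refine hw1 (hT w 1 (-u) hw0 one_ne_zero hu (by linear_combination h1 - u * h3) ?_)
    rw [hd.neg_pow]
    linear_combination h2 - u ^ d * h3

end Relations

section Blocks

variable {F : Type*} [Field F] [Fintype F] [DecidableEq F] {d : ℕ}

theorem sqAbs_ne_of_mem_relPairs [CharP F 3] (hT : NoNontrivialTriple F d) (hd : Odd d)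
    {u v w : F} (hw0 : w ≠ 0) (hw1 : w ≠ 1) (hw1' : w ≠ -1) (hp : (u, v) ∈ relPairs d w) :
    sqAbs u ≠ 0 ∧ sqAbs u ≠ 1 ∧ sqAbs u ≠ sqAbs w ∧ sqAbs u ≠ sqAbs v := by
  obtain ⟨h1, h2, hne⟩ := hp
  obtain ⟨hu0, hu1, huw, huv⟩ := ne_of_relation hT hd hw0 hw1 hw1' h1 h2
  have hu1' : u ≠ -1 := fun h => hne (by rw [h]; ring)
  have huw' : u ≠ -w := fun h => hne (by rw [h]; ring)
  have huv' : u ≠ -v := fun h => hw1' (by linear_combination h1 - h)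
  refine ⟨sqAbs_ne_zero hu0, ?_, sqAbs_ne_sqAbs huw huw', sqAbs_ne_sqAbs huv huv'⟩
  simpa only [sqAbs_one] using sqAbs_ne_sqAbs hu1 hu1'

theorem isBlock_of_mem_relPairs [CharP F 3] (hns : ¬ IsSquare (-1 : F))
    (hT : NoNontrivialTriple F d) (hd : Odd d) {w : F} (hw0 : w ≠ 0) (hw1 : w ≠ 1)
    (hw1' : w ≠ -1) {x₄ : F} (hx₄ : x₄ ≠ 0) (hx₄sq : IsSquare x₄) {p : F × F}
    (hp : p ∈ relPairs d w) :
    IsBlock d (sqAbs w * x₄) x₄ {sqAbs p.1 * x₄, sqAbs p.2 * x₄} := by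
  obtain ⟨u, v⟩ := p
  obtain ⟨hu0, hu1, huw, huv⟩ := sqAbs_ne_of_mem_relPairs hT hd hw0 hw1 hw1' hp
  obtain ⟨hv0, hv1, hvw, -⟩ :=
    sqAbs_ne_of_mem_relPairs hT hd hw0 hw1 hw1' (swap_mem_relPairs hp)
  obtain ⟨h1, h2, -⟩ := hp
  obtain ⟨c₁, hc₁, hu⟩ := exists_sign_mul_sqAbs u
  obtain ⟨c₂, hc₂, hv⟩ := exists_sign_mul_sqAbs v
  obtain ⟨c₃, hc₃, hw⟩ := exists_sign_mul_sqAbs w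
  have hcancel : ∀ {a b : F}, a ≠ b → a * x₄ ≠ b * x₄ := (mul_left_injective₀ hx₄).ne
  have hpow : ∀ {c a t : F}, (c = 1 ∨ c = -1) → c * a = t → c * (a * x₄) ^ d = t ^ d * x₄ ^ d :=
    fun hc h => by rw [sign_mul_pow hc hd, ← mul_assoc, h, mul_pow]
  refine ⟨card_pair (hcancel huv), ?_, ?_, ?_, _, _, c₁, c₂, c₃, 1, coe_pair, hcancel huv,
    hc₁, hc₂, hc₃, Or.inl rfl, ?_, ?_⟩
  · simp only [mem_insert, mem_singleton]
    rintro x (rfl | rfl)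
    exacts [⟨mul_ne_zero hu0 hx₄, (isSquare_sqAbs hns u).mul hx₄sq⟩,
      ⟨mul_ne_zero hv0 hx₄, (isSquare_sqAbs hns v).mul hx₄sq⟩]
  · simp only [mem_insert, mem_singleton, not_or]
    exact ⟨(hcancel huw).symm, (hcancel hvw).symm⟩
  · simp only [mem_insert, mem_singleton, not_or]
    exact ⟨fun h => hu1 ((mul_eq_right₀ hx₄).1 h.symm),
      fun h => hv1 ((mul_eq_right₀ hx₄).1 h.symm)⟩
  · linear_combination x₄ * (h1 + hu + hv + hw)
  · linear_combination x₄ ^ d * h2 + hpow hc₁ hu + hpow hc₂ hv + hpow hc₃ hw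

theorem isBlock_of_mem_union [CharP F 3] (hns : ¬ IsSquare (-1 : F))
    (hT : NoNontrivialTriple F d) (hd : Odd d) {z : F} (hzsq : IsSquare z) (hz0 : z ≠ 0)
    (hz1 : z ≠ 1) {x₄ : F} (hx₄ : x₄ ≠ 0) (hx₄sq : IsSquare x₄) {p : F × F}
    (hp : p ∈ relPairs d z ∪ relPairs d (-z)) :
    IsBlock d (z * x₄) x₄ {sqAbs p.1 * x₄, sqAbs p.2 * x₄} := by
  have hzm1 : z ≠ -1 := fun h => hns (h ▸ hzsq)
  rcases hp with hp | hp
  · simpa only [sqAbs_of_isSquare hzsq] using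
      isBlock_of_mem_relPairs hns hT hd hz0 hz1 hzm1 hx₄ hx₄sq hp
  · simpa only [sqAbs_neg hns, sqAbs_of_isSquare hzsq] using
      isBlock_of_mem_relPairs hns hT hd (neg_ne_zero.2 hz0) (fun h => hzm1 (neg_eq_iff_eq_neg.1 h))
        (fun h => hz1 (neg_inj.1 h)) hx₄ hx₄sq hp

theorem exists_mem_relPairs_of_isBlock (hns : ¬ IsSquare (-1 : F)) (hd : Odd d) {x₃ x₄ : F}
    (hx₃ : IsSquare x₃) (hx₄ : x₄ ≠ 0) (hx₄sq : IsSquare x₄) {s : Finset F}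
    (hs : IsBlock d x₃ x₄ s) :
    ∃ p ∈ relPairs d (x₃ / x₄) ∪ relPairs d (-(x₃ / x₄)),
      {sqAbs p.1 * x₄, sqAbs p.2 * x₄} = s := by
  obtain ⟨-, hsq, h3s, h4s, x₁, x₂, c₁, c₂, c₃, c₄, hs12, -, hc₁, hc₂, hc₃, hc₄, h1, h2⟩ := hs
  have hx₁ : x₁ ∈ s := by simp [← mem_coe, hs12]
  have hx₂ : x₂ ∈ s := by simp [← mem_coe, hs12]
  have habs : ∀ {c x : F}, (c = 1 ∨ c = -1) → IsSquare x → sqAbs (c * x) = x :=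
    fun hc hx => by rw [sqAbs_mul, sqAbs_sign hns hc, one_mul, sqAbs_of_isSquare hx]
  have hne : ∀ {c c' x x' : F}, (c = 1 ∨ c = -1) → (c' = 1 ∨ c' = -1) → IsSquare x →
      IsSquare x' → x ≠ x' → c * x + c' * x' ≠ 0 := fun hc hc' hx hx' hxx' h =>
    hxx' (by rw [← habs hc hx, ← habs hc' hx', eq_neg_of_add_eq_zero_left h, sqAbs_neg hns])
  have ht₄ : c₄ * x₄ ≠ 0 := mul_ne_zero (by rcases hc₄ with rfl | rfl <;> simp) hx₄
  have hback : ∀ {c x : F}, (c = 1 ∨ c = -1) → IsSquare x → sqAbs (c * x / (c₄ * x₄)) * x₄ = x :=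
    fun {c x} hc hx => by
      have := sqAbs_mul (c * x / (c₄ * x₄)) (c₄ * x₄)
      rwa [div_mul_cancel₀ _ ht₄, habs hc hx, habs hc₄ hx₄sq, eq_comm] at this
  rw [sign_mul_pow hc₁ hd, sign_mul_pow hc₂ hd, sign_mul_pow hc₃ hd, sign_mul_pow hc₄ hd] at h2
  have hrel := div_mem_relPairs h1 h2 ht₄
    (hne hc₁ hc₄ (hsq x₁ hx₁).2 hx₄sq fun h => h4s (h ▸ hx₁))
    (hne hc₁ hc₃ (hsq x₁ hx₁).2 hx₃ fun h => h3s (h ▸ hx₁))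
  have hw : sqAbs (c₃ * x₃ / (c₄ * x₄)) = x₃ / x₄ := eq_div_of_mul_eq hx₄ (hback hc₃ hx₃)
  refine ⟨(c₁ * x₁ / (c₄ * x₄), c₂ * x₂ / (c₄ * x₄)), ?_, ?_⟩
  · rcases sqAbs_eq_or (c₃ * x₃ / (c₄ * x₄)) with h | h
    · left; rwa [← hw, h]
    · right; rwa [← hw, h, neg_neg]
  · rw [hback hc₁ (hsq x₁ hx₁).2, hback hc₂ (hsq x₂ hx₂).2]
    exact coe_injective (by rw [hs12, coe_pair])

theorem noNontrivialTriple_of_not_exists [CharP F 3] (hns : ¬ IsSquare (-1 : F)) (hd : Odd d)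
    (hb : ¬ ∃ (s : Finset F) (c : F → F),
      s.Nonempty ∧ s.card ≤ 3 ∧ (∀ x ∈ s, x ≠ 0 ∧ IsSquare x) ∧
      (∀ x ∈ s, c x = 1 ∨ c x = -1) ∧
      ∑ x ∈ s, c x * x = 0 ∧ ∑ x ∈ s, c x * x ^ d = 0) :
    NoNontrivialTriple F d := by
  intro a b c ha hb0 hc h1 h2
  have h3 : (3 : F) = 0 := CharP.ofNat_eq_zero F 3
  by_contra hab
  have hac : a ≠ c := fun h => hab (by linear_combination -h1 - h + a * h3)
  have hbc : b ≠ c := fun h => hab (by linear_combination h1 + h - b * h3)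
  set A : Finset F := {a, b, c}
  have hA : ∀ t ∈ A, -t ∉ A := by
    simp only [A, mem_insert, mem_singleton]
    rintro t (rfl | rfl | rfl) (h | h | h)
    all_goals grind
  have hsum : ∀ k, Odd k →
      ∑ x ∈ A.image sqAbs, (if x ∈ A then 1 else -1) * x ^ k = a ^ k + b ^ k + c ^ k :=
    fun k hk => by
      rw [sum_image_sqAbs_pow hA hk, sum_insert (by simp [hab, hac]),
        sum_insert (by simp [hbc]), sum_singleton, add_assoc]
  refine hb ⟨A.image sqAbs, fun x => if x ∈ A then 1 else -1, by simp [A],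
    card_image_le.trans card_le_three, ?_, fun x _ => by by_cases x ∈ A <;> simp [*], ?_, ?_⟩
  · simp only [mem_image]
    rintro _ ⟨t, ht, rfl⟩
    exact ⟨sqAbs_ne_zero fun h => hA t ht (by subst h; simpa using ht), isSquare_sqAbs hns t⟩
  · simpa only [pow_one, h1] using hsum 1 odd_one
  · exact (hsum d hd).trans h2

end Blocks

theorem not_isSquare_neg_one_galoisField (m : ℕ) [Fintype (GaloisField 3 (2 * m + 1))] :
    ¬ IsSquare (-1 : GaloisField 3 (2 * m + 1)) := by
  rw [FiniteField.isSquare_neg_one_iff, ← Nat.card_eq_fintype_card,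
    GaloisField.card 3 _ (by omega), pow_succ, pow_mul]
  norm_num [Nat.mul_mod, Nat.pow_mod]

theorem stmt_15_general (m : ℕ) :
    ∀ (d : ℕ), d = 2 * 3 ^ m + 1 →
    -- hypothesis (a)
    (∀ z : GaloisField 3 (2 * m + 1), z ≠ 0 → z ≠ 1 → z ≠ -1 →
      {p : GaloisField 3 (2 * m + 1) × GaloisField 3 (2 * m + 1) |
        p.1 + p.2 + z + 1 = 0 ∧ p.1 ^ d + p.2 ^ d + z ^ d + 1 = 0 ∧
        (p.1 + 1) * (p.1 + z) ≠ 0}.ncard +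
      {p : GaloisField 3 (2 * m + 1) × GaloisField 3 (2 * m + 1) |
        p.1 + p.2 - z + 1 = 0 ∧ p.1 ^ d + p.2 ^ d - z ^ d + 1 = 0 ∧
        (p.1 + 1) * (p.1 - z) ≠ 0}.ncard = 2) →
    -- hypothesis (b)
    (¬ ∃ (s : Finset (GaloisField 3 (2 * m + 1))) (c : GaloisField 3 (2 * m + 1) →
        GaloisField 3 (2 * m + 1)),
      s.Nonempty ∧ s.card ≤ 3 ∧ (∀ x ∈ s, x ≠ 0 ∧ IsSquare x) ∧
      (∀ x ∈ s, c x = 1 ∨ c x = -1) ∧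
      ∑ x ∈ s, c x * x = 0 ∧ ∑ x ∈ s, c x * x ^ d = 0) →
    ∀ x₃ x₄ : GaloisField 3 (2 * m + 1), x₃ ≠ x₄ →
      x₃ ≠ 0 → IsSquare x₃ → x₄ ≠ 0 → IsSquare x₄ →
      ∃! s : Finset (GaloisField 3 (2 * m + 1)),
        s.card = 2 ∧ (∀ x ∈ s, x ≠ 0 ∧ IsSquare x) ∧ x₃ ∉ s ∧ x₄ ∉ s ∧
        ∃ x₁ x₂ c₁ c₂ c₃ c₄ : GaloisField 3 (2 * m + 1),
          (s : Set (GaloisField 3 (2 * m + 1))) = {x₁, x₂} ∧ x₁ ≠ x₂ ∧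
          (c₁ = 1 ∨ c₁ = -1) ∧ (c₂ = 1 ∨ c₂ = -1) ∧ (c₃ = 1 ∨ c₃ = -1) ∧ (c₄ = 1 ∨ c₄ = -1) ∧
          c₁ * x₁ + c₂ * x₂ + c₃ * x₃ + c₄ * x₄ = 0 ∧
          c₁ * x₁ ^ d + c₂ * x₂ ^ d + c₃ * x₃ ^ d + c₄ * x₄ ^ d = 0 := by
  intro d hd ha hb x₃ x₄ h34 h30 h3sq h40 h4sq
  classical
  let _ : Fintype (GaloisField 3 (2 * m + 1)) := Fintype.ofFinite _
  have hodd : Odd d := ⟨3 ^ m, hd⟩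
  have hns := not_isSquare_neg_one_galoisField m
  have hT := noNontrivialTriple_of_not_exists hns hodd hb
  set z := x₃ / x₄
  have hzsq : IsSquare z := h3sq.div h4sq
  have hz0 : z ≠ 0 := div_ne_zero h30 h40
  have hz1 : z ≠ 1 := fun h => h34 ((div_eq_one_iff_eq h40).1 h)
  have hzm1 : z ≠ -1 := fun h => hns (h ▸ hzsq)
  have hcard : (relPairs d z ∪ relPairs d (-z)).ncard = 2 := by
    rw [Set.ncard_union_eq (disjoint_relPairs_neg hz0), relPairs_neg hodd]
    exact ha z hz0 hz1 hzm1
  have hblock : ∀ p ∈ relPairs d z ∪ relPairs d (-z),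
      IsBlock d x₃ x₄ {sqAbs p.1 * x₄, sqAbs p.2 * x₄} := fun p hp =>
    div_mul_cancel₀ x₃ h40 ▸ isBlock_of_mem_union hns hT hodd hzsq hz0 hz1 h40 h4sq hp
  have hconst := apply_eq_apply_of_ncard_eq_two hcard (σ := Prod.swap)
    (φ := fun p => ({sqAbs p.1 * x₄, sqAbs p.2 * x₄} : Finset _))
    (fun p hp => hp.imp swap_mem_relPairs swap_mem_relPairs)
    (fun ⟨u, v⟩ hp h => by
      obtain rfl : u = v := (Prod.ext_iff.1 h).2
      simpa using (hblock _ hp).1)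
    (fun p _ => pair_comm _ _)
  obtain ⟨p, hp⟩ := Set.nonempty_of_ncard_ne_zero (hcard ▸ two_ne_zero)
  refine ⟨_, hblock p hp, fun s hs => ?_⟩
  obtain ⟨q, hq, rfl⟩ := exists_mem_relPairs_of_isBlock hns hodd h3sq h40 h4sq hs
  exact hconst hq hp

/-- Under hypotheses (a) (Lemma 4.2 counting) and (b) (no ≤3-subset of nonzero squares
solves the homogeneous system), for every pair of distinct nonzero squares x₃,x₄ in
GF(3^{2m+1}) there is exactly one 2-subset {x₁,x₂} of nonzero squares disjoint from
{x₃,x₄} and signs c₁,...,c₄ ∈ {1,-1} with c₁x₁+c₂x₂+c₃x₃+c₄x₄ = 0 and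
c₁x₁^d+c₂x₂^d+c₃x₃^d+c₄x₄^d = 0; hence the weight-4 dual codewords support a
Steiner system S(2,4,(q-1)/2). -/
theorem stmt_15 (m : ℕ) (hm : 2 ≤ m) :
    ∀ (d : ℕ), d = 2 * 3 ^ m + 1 →
    -- hypothesis (a)
    (∀ z : GaloisField 3 (2 * m + 1), z ≠ 0 → z ≠ 1 → z ≠ -1 →
      {p : GaloisField 3 (2 * m + 1) × GaloisField 3 (2 * m + 1) |
        p.1 + p.2 + z + 1 = 0 ∧ p.1 ^ d + p.2 ^ d + z ^ d + 1 = 0 ∧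
        (p.1 + 1) * (p.1 + z) ≠ 0}.ncard +
      {p : GaloisField 3 (2 * m + 1) × GaloisField 3 (2 * m + 1) |
        p.1 + p.2 - z + 1 = 0 ∧ p.1 ^ d + p.2 ^ d - z ^ d + 1 = 0 ∧
        (p.1 + 1) * (p.1 - z) ≠ 0}.ncard = 2) →
    -- hypothesis (b)
    (¬ ∃ (s : Finset (GaloisField 3 (2 * m + 1))) (c : GaloisField 3 (2 * m + 1) →
        GaloisField 3 (2 * m + 1)),
      s.Nonempty ∧ s.card ≤ 3 ∧ (∀ x ∈ s, x ≠ 0 ∧ IsSquare x) ∧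
      (∀ x ∈ s, c x = 1 ∨ c x = -1) ∧
      ∑ x ∈ s, c x * x = 0 ∧ ∑ x ∈ s, c x * x ^ d = 0) →
    ∀ x₃ x₄ : GaloisField 3 (2 * m + 1), x₃ ≠ x₄ →
      x₃ ≠ 0 → IsSquare x₃ → x₄ ≠ 0 → IsSquare x₄ →
      ∃! s : Finset (GaloisField 3 (2 * m + 1)),
        s.card = 2 ∧ (∀ x ∈ s, x ≠ 0 ∧ IsSquare x) ∧ x₃ ∉ s ∧ x₄ ∉ s ∧
        ∃ x₁ x₂ c₁ c₂ c₃ c₄ : GaloisField 3 (2 * m + 1),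
          (s : Set (GaloisField 3 (2 * m + 1))) = {x₁, x₂} ∧ x₁ ≠ x₂ ∧
          (c₁ = 1 ∨ c₁ = -1) ∧ (c₂ = 1 ∨ c₂ = -1) ∧ (c₃ = 1 ∨ c₃ = -1) ∧ (c₄ = 1 ∨ c₄ = -1) ∧
          c₁ * x₁ + c₂ * x₂ + c₃ * x₃ + c₄ * x₄ = 0 ∧
          c₁ * x₁ ^ d + c₂ * x₂ ^ d + c₃ * x₃ ^ d + c₄ * x₄ ^ d = 0 :=
  stmt_15_general m
end
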